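/- Let b₁, …, b_{2N} ∈ ℝ³ be a trivial drive, i.e., b_n = b_{2N+1−n} for all 1 ≤ n ≤ 2N (the steps are exactly retraced in reverse). Then the loop condition Σ_{n=1}^{2N} (−1)^{n+1} b_n = 0 holds, and the characteristic sum vanishes: S(b) = Σ_{n=1}^{2N−1} (−1)ⁿ (d_n × b_{n+1}) = 0. Consequently the signed area and the characteristic reciprocal lattice vector of a trivial drive are zero. -/

import Mathlib

open Matrix Finset

/-- The displacement vector after `n` steps of a 3D exchange drive:
`d_n = Σ_{k=1}^{n} (−1)^{k+1} b_k`. -/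
noncomputable def disp3 (b : ℕ → Fin 3 → ℝ) (n : ℕ) : Fin 3 → ℝ :=
  ∑ k ∈ Finset.Icc 1 n, (-1 : ℝ) ^ (k + 1) • b k

/-- The characteristic sum `S(b) = Σ_{n=1}^{2N−1} (−1)ⁿ (d_n × b_{n+1})` of a 3D
exchange drive of length `2N`. -/
noncomputable def charSum (N : ℕ) (b : ℕ → Fin 3 → ℝ) : Fin 3 → ℝ :=
  ∑ n ∈ Finset.Icc 1 (2 * N - 1), (-1 : ℝ) ^ n • ((disp3 b n) ⨯₃ (b (n + 1)))

/-! Retracing the path makes the displacements symmetric, `d_{2N-m} = d_{2N} + d_m`; at `m = 2N`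
this gives `d_{2N} = 0`, the loop condition, and hence `d_{2N-m} = d_m`. Since
`d_{n+1} = d_n + (-1)ⁿ b_{n+1}`, the summands of `S(b)` are `d_n × d_{n+1}`, and the reflection
`n ↦ 2N-1-n` sends each of them to `d_{n+1} × d_n = -(d_n × d_{n+1})`, so `S(b) = -S(b)`. -/

lemma neg_one_pow_congr_mod_two {R : Type*} [Monoid R] [HasDistribNeg R] {a c : ℕ}
    (h : a % 2 = c % 2) : (-1 : R) ^ a = (-1) ^ c :=
  neg_one_pow_congr (by simp only [Nat.even_iff]; omega)

lemma disp3_zero (b : ℕ → Fin 3 → ℝ) : disp3 b 0 = 0 := by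
  simp [disp3]

lemma disp3_succ (b : ℕ → Fin 3 → ℝ) (n : ℕ) :
    disp3 b (n + 1) = disp3 b n + (-1 : ℝ) ^ n • b (n + 1) := by
  rw [disp3, Finset.sum_Icc_succ_top (by omega), ← disp3,
    neg_one_pow_congr_mod_two (show (n + 1 + 1) % 2 = n % 2 by omega)]

lemma disp3_cross_disp3_succ (b : ℕ → Fin 3 → ℝ) (n : ℕ) :
    disp3 b n ⨯₃ disp3 b (n + 1) = (-1 : ℝ) ^ n • (disp3 b n ⨯₃ b (n + 1)) := by
  rw [disp3_succ, map_add, map_smul, cross_self, zero_add]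

lemma charSum_eq_sum_range (N : ℕ) (b : ℕ → Fin 3 → ℝ) :
    charSum N b = ∑ n ∈ Finset.range (2 * N), disp3 b n ⨯₃ disp3 b (n + 1) := by
  have hsub : Finset.Icc 1 (2 * N - 1) ⊆ Finset.range (2 * N) := fun n hn => by
    simp only [Finset.mem_Icc, Finset.mem_range] at hn ⊢; omega
  rw [charSum, Finset.sum_subset hsub fun n hn hn' => ?_]
  · exact Finset.sum_congr rfl fun n _ => (disp3_cross_disp3_succ b n).symm
  · obtain rfl : n = 0 := by simp only [Finset.mem_Icc, Finset.mem_range] at hn hn'; omega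
    simp [disp3_zero]

def IsTrivialDrive (N : ℕ) (b : ℕ → Fin 3 → ℝ) : Prop :=
  ∀ n, 1 ≤ n → n ≤ 2 * N → b n = b (2 * N + 1 - n)

namespace IsTrivialDrive

variable {N : ℕ} {b : ℕ → Fin 3 → ℝ}

lemma disp3_two_mul_sub_eq_add (hb : IsTrivialDrive N b) {m : ℕ} (hm : m ≤ 2 * N) :
    disp3 b (2 * N - m) = disp3 b (2 * N) + disp3 b m := by
  induction m with
  | zero => simp [disp3_zero]
  | succ m ih =>
    have hstep := disp3_succ b (2 * N - (m + 1))
    rw [show 2 * N - (m + 1) + 1 = 2 * N - m by omega, ih (by omega),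
      hb _ (by omega) (by omega), show 2 * N + 1 - (2 * N - m) = m + 1 by omega,
      neg_one_pow_congr_mod_two (show (2 * N - (m + 1)) % 2 = (m + 1) % 2 by omega),
      pow_succ] at hstep
    rw [disp3_succ]
    linear_combination (norm := module) -hstep

lemma disp3_two_mul (hb : IsTrivialDrive N b) : disp3 b (2 * N) = 0 := by
  have h := hb.disp3_two_mul_sub_eq_add le_rfl
  rw [Nat.sub_self, disp3_zero] at h
  linear_combination (norm := module) (-(1 / 2 : ℝ)) • h

lemma disp3_two_mul_sub (hb : IsTrivialDrive N b) {m : ℕ} (hm : m ≤ 2 * N) :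
    disp3 b (2 * N - m) = disp3 b m := by
  rw [hb.disp3_two_mul_sub_eq_add hm, hb.disp3_two_mul, zero_add]

lemma charSum_eq_zero (hb : IsTrivialDrive N b) : charSum N b = 0 := by
  rw [charSum_eq_sum_range]
  have hanti : ∑ n ∈ Finset.range (2 * N), disp3 b n ⨯₃ disp3 b (n + 1) =
      -∑ n ∈ Finset.range (2 * N), disp3 b n ⨯₃ disp3 b (n + 1) := by
    conv_lhs => rw [← Finset.sum_range_reflect]
    rw [← Finset.sum_neg_distrib]
    refine Finset.sum_congr rfl fun n hn => ?_
    rw [Finset.mem_range] at hn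
    rw [show 2 * N - 1 - n = 2 * N - (n + 1) by omega, show 2 * N - (n + 1) + 1 = 2 * N - n by omega,
      hb.disp3_two_mul_sub hn, hb.disp3_two_mul_sub hn.le, cross_anticomm]
  linear_combination (norm := module) (1 / 2 : ℝ) • hanti

end IsTrivialDrive

/-- For a trivial drive `b₁, …, b_{2N}` (one whose steps are exactly
retraced in reverse: `b_n = b_{2N+1−n}`), the loop condition
`Σ_{n=1}^{2N} (−1)^{n+1} b_n = 0` holds and the characteristic sum
`S(b) = Σ_{n=1}^{2N−1} (−1)ⁿ (d_n × b_{n+1})` vanishes; consequently the signed area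
and the characteristic reciprocal lattice vector of a trivial drive are zero. -/
theorem stmt_5 (N : ℕ) (b : ℕ → Fin 3 → ℝ)
    (htriv : ∀ n, 1 ≤ n → n ≤ 2 * N → b n = b (2 * N + 1 - n)) :
    (∑ n ∈ Finset.Icc 1 (2 * N), (-1 : ℝ) ^ (n + 1) • b n = 0)
    ∧ charSum N b = 0 :=
  ⟨IsTrivialDrive.disp3_two_mul htriv, IsTrivialDrive.charSum_eq_zero htriv⟩
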